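/- arXiv:2603.28477 — 5 statements merged into one kernel-verified Lean document; each statement's English description precedes it below -/
import Mathlib

section
/- There is a constant C = C(n,s) > 0 such that for all R > 0 and all (x,t) with |x| ≤ R/3 and |t| ≤ R^2/9, one has ∫_{-∞}^{-R^2} ∫_{ℝ^n} M(x-y, t-τ) dy dτ ≤ C/R^{2s}, where M(x,t) = c_{n,s} t^{-(n/2+1+s)} e^{-|x|^2/(4t)}. -/
/-! Integrating out the space variable with the Gaussian integral
`∫ exp (-‖y‖² / (4a)) dy = (4πa)^{n/2}` turns the kernel into `K a^{-(1+s)}` with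
`K = c (4π)^{n/2}`, so the double integral equals `K (t + R²)^{-s} / s`.
Since `|t| ≤ R²/9`, `t + R² ≥ 8R²/9`, which gives the bound `K (9/8)^s / (s R^{2s})`. -/

open MeasureTheory Real

noncomputable def heatM (n : ℕ) (s c : ℝ) (x : EuclideanSpace ℝ (Fin n)) (t : ℝ) : ℝ :=
  c * t ^ (-((n : ℝ) / 2 + 1 + s)) * Real.exp (-‖x‖ ^ 2 / (4 * t))

theorem integral_exp_neg_sq_norm_div {V : Type*} [NormedAddCommGroup V] [InnerProductSpace ℝ V]
    [FiniteDimensional ℝ V] [MeasurableSpace V] [BorelSpace V] {a : ℝ} (ha : 0 < a) :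
    ∫ v : V, exp (-‖v‖ ^ 2 / (4 * a)) = (4 * π * a) ^ (Module.finrank ℝ V / 2 : ℝ) := by
  have hπ : π / (1 / (4 * a)) = 4 * π * a := by field_simp
  simp_rw [← hπ,
    ← GaussianFourier.integral_rexp_neg_mul_sq_norm (V := V) (by positivity : 0 < 1 / (4 * a)),
    neg_mul, one_div_mul_eq_div, neg_div]

theorem integral_heatM_sub (n : ℕ) (s c : ℝ) (x : EuclideanSpace ℝ (Fin n)) {a : ℝ}
    (ha : 0 < a) :
    ∫ y, heatM n s c (x - y) a = c * (4 * π) ^ ((n : ℝ) / 2) * a ^ (-(1 + s)) := by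
  simp only [heatM]
  rw [integral_const_mul, integral_sub_left_eq_self (fun y ↦ exp (-‖y‖ ^ 2 / (4 * a))),
    integral_exp_neg_sq_norm_div ha, finrank_euclideanSpace_fin, mul_rpow (by positivity) ha.le,
    mul_left_comm, mul_assoc, ← rpow_add ha]
  ring_nf

theorem integral_Iio_comp_sub_left {E : Type*} [NormedAddCommGroup E] [NormedSpace ℝ E]
    (f : ℝ → E) (t b : ℝ) :
    ∫ τ in Set.Iio b, f (t - τ) = ∫ u in Set.Ioi (t - b), f u := by
  have hpre : (fun τ ↦ t - τ) ⁻¹' Set.Ioi (t - b) = Set.Iio b := by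
    ext τ
    simp
  rw [← hpre, (Measure.measurePreserving_sub_left volume t).setIntegral_preimage_emb
    (Homeomorph.subLeft t).measurableEmbedding]

theorem integral_Iio_sub_rpow {p : ℝ} (hp : p < -1) {b t : ℝ} (hbt : b < t) :
    ∫ τ in Set.Iio b, (t - τ) ^ p = -(t - b) ^ (p + 1) / (p + 1) := by
  rw [integral_Iio_comp_sub_left (· ^ p), integral_Ioi_rpow_of_lt hp (sub_pos.2 hbt)]

theorem rpow_neg_le_of_mul_sq_le {k R u s : ℝ} (hk : 0 < k) (hR : 0 < R) (hs : 0 ≤ s)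
    (h : k * R ^ 2 ≤ u) : u ^ (-s) ≤ k ^ (-s) / R ^ (2 * s) := by
  calc u ^ (-s) ≤ (k * R ^ 2) ^ (-s) := rpow_le_rpow_of_nonpos (by positivity) h (by linarith)
    _ = k ^ (-s) / R ^ (2 * s) := by
      rw [mul_rpow hk.le (by positivity), ← rpow_natCast_mul hR.le, div_eq_mul_inv,
        ← rpow_neg hR.le]
      push_cast
      ring_nf

theorem stmt2_general (n : ℕ) (s : ℝ) (hs : s ∈ Set.Ioo (0 : ℝ) 1)
    (c : ℝ) (hc : 0 < c) :
    ∃ C : ℝ, 0 < C ∧ ∀ R : ℝ, 0 < R → ∀ (x : EuclideanSpace ℝ (Fin n)) (t : ℝ),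
      ‖x‖ ≤ R / 3 → |t| ≤ R ^ 2 / 9 →
      (∫ τ in Set.Iio (-(R ^ 2)), ∫ y : EuclideanSpace ℝ (Fin n),
          heatM n s c (x - y) (t - τ)) ≤ C / R ^ (2 * s) := by
  obtain ⟨hs0, -⟩ := hs
  set K := c * (4 * π) ^ ((n : ℝ) / 2)
  refine ⟨K * (8 / 9 : ℝ) ^ (-s) / s, by positivity, fun R hR x t _ ht ↦ ?_⟩
  have hRt : 8 / 9 * R ^ 2 ≤ t - -(R ^ 2) := by linarith [(abs_le.1 ht).1]
  have hinner : ∀ τ ∈ Set.Iio (-(R ^ 2)),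
      ∫ y, heatM n s c (x - y) (t - τ) = K * (t - τ) ^ (-(1 + s)) := fun τ hτ ↦
    integral_heatM_sub n s c x (by linarith [Set.mem_Iio.1 hτ, sq_nonneg R])
  rw [setIntegral_congr_fun measurableSet_Iio hinner, integral_const_mul,
    integral_Iio_sub_rpow (by linarith) (by nlinarith), show -(1 + s) + 1 = -s by ring,
    neg_div_neg_eq]
  calc K * ((t - -R ^ 2) ^ (-s) / s) ≤ K * ((8 / 9) ^ (-s) / R ^ (2 * s) / s) := by
        gcongr
        exact rpow_neg_le_of_mul_sq_le (by norm_num) hR hs0.le hRt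
    _ = K * (8 / 9) ^ (-s) / s / R ^ (2 * s) := by ring

theorem stmt2 (n : ℕ) (hn : 1 ≤ n) (s : ℝ) (hs : s ∈ Set.Ioo (0 : ℝ) 1)
    (c : ℝ) (hc : 0 < c) :
    ∃ C : ℝ, 0 < C ∧ ∀ R : ℝ, 0 < R → ∀ (x : EuclideanSpace ℝ (Fin n)) (t : ℝ),
      ‖x‖ ≤ R / 3 → |t| ≤ R ^ 2 / 9 →
      (∫ τ in Set.Iio (-(R ^ 2)), ∫ y : EuclideanSpace ℝ (Fin n),
          heatM n s c (x - y) (t - τ)) ≤ C / R ^ (2 * s) :=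
  stmt2_general n s hs c hc
end

section
/- Fix n ≥ 1, s ∈ (0,1), R ≥ 1, and set t₀ = R^{3/2}. For all (y,τ) with |y| ≥ R, τ ≤ -R^{3/2}, and |τ|² ≤ R|y|², the kernel ratio satisfies M(-y, -τ)/M(-y, t₀ - τ) ≤ C exp(-c R^{1/2}) for positive constants c, C depending only on n and s. -/
open MeasureTheory Real

theorem stmt13 (n : ℕ) (hn : 1 ≤ n) (s : ℝ) (hs : s ∈ Set.Ioo (0 : ℝ) 1)
    (cns : ℝ) (hcns : 0 < cns) :
    ∃ c C : ℝ, 0 < c ∧ 0 < C ∧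
      ∀ (R : ℝ) (y : EuclideanSpace ℝ (Fin n)) (τ : ℝ), 1 ≤ R →
        R ≤ ‖y‖ → τ ≤ -R ^ ((3 : ℝ) / 2) → τ ^ 2 ≤ R * ‖y‖ ^ 2 →
        heatM n s cns (-y) (-τ) / heatM n s cns (-y) (R ^ ((3 : ℝ) / 2) - τ)
          ≤ C * Real.exp (-c * R ^ ((1 : ℝ) / 2)) := by
  obtain ⟨hs0, hs1⟩ := hs
  set p : ℝ := -((n : ℝ) / 2 + 1 + s) with hpdef
  have hppos : 0 < -p := by
    have : (0:ℝ) ≤ (n:ℝ) := Nat.cast_nonneg n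
    simp only [hpdef, neg_neg]; linarith
  refine ⟨1/8, 2 ^ (-p), by norm_num, Real.rpow_pos_of_pos (by norm_num) _, ?_⟩
  intro R y τ hR hRy hτ hτ2
  have hR0 : (0:ℝ) < R := lt_of_lt_of_le one_pos hR
  set t₀ : ℝ := R ^ ((3 : ℝ) / 2) with ht₀
  have ht₀1 : 1 ≤ t₀ := Real.one_le_rpow hR (by norm_num)
  have ht₀split : t₀ = R * R ^ ((1:ℝ)/2) := by
    rw [ht₀, show (3:ℝ)/2 = 1 + (1:ℝ)/2 by norm_num, Real.rpow_add hR0, Real.rpow_one]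
  set a : ℝ := -τ with ha_def
  set b : ℝ := t₀ - τ with hb_def
  have hat : t₀ ≤ a := by simp only [ha_def]; linarith
  have ha0 : 0 < a := lt_of_lt_of_le (by linarith) hat
  have hb0 : 0 < b := by simp only [hb_def]; linarith [ha0]
  have hba : b = a + t₀ := by simp only [hb_def, ha_def]; ring
  have hb2a : b ≤ 2 * a := by rw [hba]; linarith
  set N : ℝ := ‖y‖ ^ 2 with hN
  have hN0 : 0 < N := by
    have : (0:ℝ) < ‖y‖ := lt_of_lt_of_le hR0 hRy
    positivity
  have hR12 : (0:ℝ) < R ^ ((1:ℝ)/2) := Real.rpow_pos_of_pos hR0 _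
  -- key product inequality
  have hmul : a * b * R ^ ((1:ℝ)/2) ≤ 2 * N * t₀ := by
    have h1 : a * b ≤ 2 * τ ^ 2 := by
      have : a * b ≤ a * (2 * a) := by nlinarith
      nlinarith
    have h2 : τ ^ 2 * R ^ ((1:ℝ)/2) ≤ N * t₀ := by
      rw [ht₀split]
      calc τ ^ 2 * R ^ ((1:ℝ)/2) ≤ R * N * R ^ ((1:ℝ)/2) := by
            have := hτ2; nlinarith
        _ = N * (R * R ^ ((1:ℝ)/2)) := by ring
    nlinarith [mul_le_mul_of_nonneg_right h1 hR12.le, h2]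
  -- exponential factor inequality
  have hexp : Real.exp (-N / (4 * a)) ≤
      Real.exp (-(1/8) * R ^ ((1:ℝ)/2)) * Real.exp (-N / (4 * b)) := by
    rw [← Real.exp_add, Real.exp_le_exp]
    have hane : a ≠ 0 := ne_of_gt ha0
    have hbne : b ≠ 0 := ne_of_gt hb0
    have heq : -N / (4 * a) - (-(1/8) * R ^ ((1:ℝ)/2) + -N / (4 * b))
        = (a * b * R ^ ((1:ℝ)/2) - 2 * N * t₀) / (8 * (a * b)) := by
      rw [hba]
      have h2 : a + t₀ ≠ 0 := by rw [← hba]; exact hbne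
      field_simp
      ring
    have hle : (a * b * R ^ ((1:ℝ)/2) - 2 * N * t₀) / (8 * (a * b)) ≤ 0 := by
      apply div_nonpos_of_nonpos_of_nonneg
      · linarith
      · positivity
    linarith [heq ▸ hle]
  -- power factor inequality
  have hpow : a ^ p ≤ 2 ^ (-p) * b ^ p := by
    have hap : 0 < a ^ (-p) := Real.rpow_pos_of_pos ha0 _
    have hbp : 0 < b ^ (-p) := Real.rpow_pos_of_pos hb0 _
    have h1 : b ^ (-p) ≤ 2 ^ (-p) * a ^ (-p) := by
      calc b ^ (-p) ≤ (2 * a) ^ (-p) :=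
            Real.rpow_le_rpow hb0.le hb2a hppos.le
        _ = 2 ^ (-p) * a ^ (-p) := Real.mul_rpow (by norm_num) ha0.le
    have hap' : a ^ p = (a ^ (-p))⁻¹ := by
      have h := Real.rpow_neg ha0.le (-p); rwa [neg_neg] at h
    have hbp' : b ^ p = (b ^ (-p))⁻¹ := by
      have h := Real.rpow_neg hb0.le (-p); rwa [neg_neg] at h
    rw [hap', hbp', ← one_div, ← div_eq_mul_inv, div_le_div_iff₀ hap hbp]
    linarith [h1]
  -- assemble
  have hBpos : 0 < heatM n s cns (-y) b := by
    unfold heatM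
    have := Real.rpow_pos_of_pos hb0 (-((n : ℝ) / 2 + 1 + s))
    positivity
  rw [div_le_iff₀ hBpos]
  unfold heatM
  simp only [norm_neg, ← hpdef, ← hN]
  calc cns * a ^ p * Real.exp (-N / (4 * a))
      = cns * (a ^ p * Real.exp (-N / (4 * a))) := by ring
    _ ≤ cns * ((2 ^ (-p) * b ^ p) *
          (Real.exp (-(1/8) * R ^ ((1:ℝ)/2)) * Real.exp (-N / (4 * b)))) := by
        apply mul_le_mul_of_nonneg_left _ hcns.le
        exact mul_le_mul hpow hexp (Real.exp_pos _).le (by positivity)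
    _ = 2 ^ (-p) * Real.exp (-(1/8) * R ^ ((1:ℝ)/2)) *
          (cns * b ^ p * Real.exp (-N / (4 * b))) := by ring
end

section
/- Fix n ≥ 1, s ∈ (0,1), R ≥ 1, and set t₀ = R^{3/2}. For all (y,τ) with |y| ≥ R and -R^{3/2} ≤ τ < 0, the kernel ratio satisfies M(-y, -τ)/M(-y, t₀ - τ) ≤ C R^{-1/2} for a constant C depending only on n and s. -/
/-!
With `T = -τ ≤ t₀` and `p = n/2 + 1 + s`, the constant cancels and the ratio equals
`((t₀ + T)/T)^p · exp(-|y|² t₀ / (4T(t₀ + T)))`. As `t₀ + T ≤ 2t₀`, this is at most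
`(2t₀/|y|²)^p · r^p e^{-r/8}` with `r = |y|²/T`, and `r^p e^{-r/8} ≤ (8p/e)^p` because
`u e^{-u} ≤ e^{-1}`. Finally `2t₀/|y|² ≤ 2R^{-1/2}` and `p ≥ 1`.
-/

open MeasureTheory Real

namespace Real

theorem rpow_mul_exp_neg_div_le {a p r : ℝ} (ha : 0 < a) (hp : 0 < p) (hr : 0 ≤ r) :
    r ^ p * exp (-r / a) ≤ (a * p / exp 1) ^ p := by
  have hap : 0 < a * p := by positivity
  have hbase : r * exp (-(r / (a * p))) ≤ a * p / exp 1 := by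
    have := mul_exp_neg_le_exp_neg_one (r / (a * p))
    rw [exp_neg 1, inv_eq_one_div] at this
    calc r * exp (-(r / (a * p))) = a * p * (r / (a * p) * exp (-(r / (a * p)))) := by
          field_simp
      _ ≤ a * p * (1 / exp 1) := by gcongr
      _ = a * p / exp 1 := by ring
  calc r ^ p * exp (-r / a) = (r * exp (-(r / (a * p)))) ^ p := by
        rw [mul_rpow hr (exp_pos _).le, ← exp_mul]
        congr 2
        field_simp
    _ ≤ (a * p / exp 1) ^ p := by gcongr

end Real

section HeatKernel

variable {n : ℕ} {s : ℝ}

theorem heatM_div_heatM_le_heatM_one_div_heatM_one {c t t' : ℝ}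
    {x : EuclideanSpace ℝ (Fin n)} (ht : 0 < t) (ht' : 0 < t') :
    heatM n s c x t / heatM n s c x t' ≤ heatM n s 1 x t / heatM n s 1 x t' := by
  rcases eq_or_ne c 0 with rfl | hc
  · simp only [heatM, zero_mul, zero_div]
    positivity
  · apply le_of_eq
    simp only [heatM, one_mul, mul_assoc]
    exact mul_div_mul_left _ _ hc

theorem heatM_one_div_heatM_one {t t' : ℝ} (x : EuclideanSpace ℝ (Fin n)) (ht : 0 < t)
    (ht' : 0 < t') : heatM n s 1 x t / heatM n s 1 x t' =
      (t' / t) ^ ((n : ℝ) / 2 + 1 + s) * exp (‖x‖ ^ 2 / (4 * t') - ‖x‖ ^ 2 / (4 * t)) := by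
  simp only [heatM, one_mul, rpow_neg ht.le, rpow_neg ht'.le, div_rpow ht'.le ht.le, exp_sub,
    neg_div, exp_neg]
  field_simp

theorem heatM_one_div_heatM_one_add_le {t₀ T : ℝ} (hp : 0 < (n : ℝ) / 2 + 1 + s)
    {x : EuclideanSpace ℝ (Fin n)} (hx : x ≠ 0) (hT : 0 < T) (hTt₀ : T ≤ t₀) :
    heatM n s 1 x T / heatM n s 1 x (t₀ + T) ≤
      (2 * t₀ / ‖x‖ ^ 2) ^ ((n : ℝ) / 2 + 1 + s) *
        (8 * ((n : ℝ) / 2 + 1 + s) / exp 1) ^ ((n : ℝ) / 2 + 1 + s) := by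
  set p := (n : ℝ) / 2 + 1 + s
  set N := ‖x‖ ^ 2
  have hN : 0 < N := by positivity
  have ht₀ : 0 < t₀ := hT.trans_le hTt₀
  have hexp : N / (4 * (t₀ + T)) - N / (4 * T) ≤ -(N / T) / 8 := by
    have hsum : N / (4 * (t₀ + T)) - N / (4 * T) + N / T / 8 =
        -(N * (t₀ - T) / (8 * T * (t₀ + T))) := by
      field_simp
      ring
    have : 0 ≤ N * (t₀ - T) / (8 * T * (t₀ + T)) :=
      div_nonneg (mul_nonneg hN.le (by linarith)) (by positivity)
    linarith
  have hpow : ((t₀ + T) / T) ^ p ≤ (2 * t₀ / N) ^ p * (N / T) ^ p := by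
    rw [← mul_rpow (by positivity) (by positivity)]
    gcongr
    rw [div_mul_div_cancel₀ hN.ne']
    gcongr
    linarith
  rw [heatM_one_div_heatM_one x hT (by positivity)]
  calc ((t₀ + T) / T) ^ p * exp (N / (4 * (t₀ + T)) - N / (4 * T))
      ≤ (2 * t₀ / N) ^ p * (N / T) ^ p * exp (-(N / T) / 8) := by gcongr
    _ ≤ (2 * t₀ / N) ^ p * (8 * p / exp 1) ^ p := by
        rw [mul_assoc]
        gcongr
        exact rpow_mul_exp_neg_div_le (by norm_num) hp (by positivity)

end HeatKernel

theorem two_mul_rpow_div_sq_rpow_le {R r p : ℝ} (hR : 1 ≤ R) (hRr : R ≤ r) (hp : 1 ≤ p) :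
    (2 * R ^ ((3 : ℝ) / 2) / r ^ 2) ^ p ≤ 2 ^ p * R ^ (-(1 : ℝ) / 2) := by
  have hR0 : 0 < R := by linarith
  have hbase : 2 * R ^ ((3 : ℝ) / 2) / r ^ 2 ≤ 2 * R ^ (-(1 : ℝ) / 2) := by
    calc 2 * R ^ ((3 : ℝ) / 2) / r ^ 2 ≤ 2 * R ^ ((3 : ℝ) / 2) / R ^ (2 : ℝ) := by
          rw [rpow_two]; gcongr
      _ = 2 * R ^ (-(1 : ℝ) / 2) := by
          rw [mul_div_assoc, ← rpow_sub hR0]; norm_num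
  calc (2 * R ^ ((3 : ℝ) / 2) / r ^ 2) ^ p ≤ (2 * R ^ (-(1 : ℝ) / 2)) ^ p := by gcongr
    _ = 2 ^ p * R ^ (-(1 : ℝ) / 2 * p) := by
        rw [mul_rpow (by norm_num) (by positivity), ← rpow_mul hR0.le]
    _ ≤ 2 ^ p * R ^ (-(1 : ℝ) / 2) := by
        gcongr
        linarith

theorem stmt14_general (n : ℕ) (s : ℝ) (hs : s ∈ Set.Ioo (0 : ℝ) 1)
    (cns : ℝ) :
    ∃ C : ℝ, 0 < C ∧
      ∀ (R : ℝ) (y : EuclideanSpace ℝ (Fin n)) (τ : ℝ), 1 ≤ R →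
        R ≤ ‖y‖ → -R ^ ((3 : ℝ) / 2) ≤ τ → τ < 0 →
        heatM n s cns (-y) (-τ) / heatM n s cns (-y) (R ^ ((3 : ℝ) / 2) - τ)
          ≤ C * R ^ (-(1 : ℝ) / 2) := by
  set p := (n : ℝ) / 2 + 1 + s with hp_def
  have hp : 1 ≤ p := by rw [hp_def]; linarith [hs.1, (n.cast_nonneg : (0 : ℝ) ≤ n)]
  refine ⟨2 ^ p * (8 * p / exp 1) ^ p, by positivity, fun R y τ hR hRy hτ hτ0 => ?_⟩
  have hy : y ≠ 0 := norm_pos_iff.mp (by linarith)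
  have ht₀ : 0 < R ^ ((3 : ℝ) / 2) := by positivity
  rw [sub_eq_add_neg]
  calc _ ≤ heatM n s 1 (-y) (-τ) / heatM n s 1 (-y) (R ^ ((3 : ℝ) / 2) + -τ) :=
        heatM_div_heatM_le_heatM_one_div_heatM_one (by linarith) (by linarith)
    _ ≤ (2 * R ^ ((3 : ℝ) / 2) / ‖-y‖ ^ 2) ^ p * (8 * p / exp 1) ^ p :=
        heatM_one_div_heatM_one_add_le (zero_lt_one.trans_le hp) (neg_ne_zero.mpr hy) (by linarith)
          (by linarith)
    _ ≤ 2 ^ p * R ^ (-(1 : ℝ) / 2) * (8 * p / exp 1) ^ p := by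
        rw [norm_neg]
        gcongr
        exact two_mul_rpow_div_sq_rpow_le hR hRy hp
    _ = _ := by ring

theorem stmt14 (n : ℕ) (hn : 1 ≤ n) (s : ℝ) (hs : s ∈ Set.Ioo (0 : ℝ) 1)
    (cns : ℝ) (hcns : 0 < cns) :
    ∃ C : ℝ, 0 < C ∧
      ∀ (R : ℝ) (y : EuclideanSpace ℝ (Fin n)) (τ : ℝ), 1 ≤ R →
        R ≤ ‖y‖ → -R ^ ((3 : ℝ) / 2) ≤ τ → τ < 0 →
        heatM n s cns (-y) (-τ) / heatM n s cns (-y) (R ^ ((3 : ℝ) / 2) - τ)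
          ≤ C * R ^ (-(1 : ℝ) / 2) :=
  stmt14_general n s hs cns
end

section
/- Let n ≥ 1, s ∈ (0,1). Suppose u ∈ L^1_loc(ℝ^n × ℝ) satisfies ∫∫ |u(y,τ)|/(1 + |y|^{n+2+2s} + |τ|^{n/2+1+s}) dy dτ < ∞. Define E(x,t,R) = ∫∫_{(ℝ^n×(-∞,t))\Q_R} |u(y,τ)| M(x-y, t-τ) dy dτ, where Q_R = {(y,τ) : |y| ≤ R, |τ| ≤ R²}. Then lim_{R→∞} sup_{(x,t) ∈ Q_{R/2}} E(x,t,R) = 0. -/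
open MeasureTheory Real

open Filter Topology ENNReal

/-! Outside `Q_R`, and for `(x, t) ∈ Q_{R/2}` with `τ < t`, the parabolic distance from `(x, t)`
to `(y, τ)` controls the distance from the origin: `1 + |y|² + |τ| ≤ 12 (|x - y|² + (t - τ))`.
Since `T^{-a} e^{-r²/4T} ≲ (r² + T)^{-a}`, this gives
`M(x - y, t - τ) ≤ C / (1 + |y|^{n+2+2s} + |τ|^{n/2+1+s})` with `C` independent of `R, x, t`, so
`E(x, t, R)` is bounded by `C` times the tail outside `Q_R` of the finite weighted integral of
`|u|`, which tends to `0` by continuity of measure from above. -/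

theorem one_add_rpow_mul_exp_neg_le {a z : ℝ} (ha : 0 ≤ a) (hz : 0 ≤ z) :
    (1 + z) ^ a * exp (-z / 4) ≤ (4 * a + 1) ^ a := by
  -- `k = 4a + 1` is chosen with `k ≥ 1` and `a / k ≤ 1 / 4`
  set k := 4 * a + 1
  have hk : 1 ≤ k := by linarith
  have hkpos : 0 < k := by linarith
  have h1 : (1 + z) ^ a ≤ k ^ a * exp (z / 4) := by
    calc (1 + z) ^ a ≤ (k * (1 + z / k)) ^ a := by
          gcongr
          rw [mul_add, mul_div_cancel₀ _ hkpos.ne']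
          linarith
      _ = k ^ a * (1 + z / k) ^ a := mul_rpow hkpos.le (by positivity)
      _ ≤ k ^ a * exp (z / k) ^ a := by
          gcongr
          linarith [add_one_le_exp (z / k)]
      _ = k ^ a * exp (a * z / k) := by rw [← exp_mul]; ring_nf
      _ ≤ k ^ a * exp (z / 4) := by
          gcongr k ^ a * exp ?_
          rw [div_le_div_iff₀ hkpos four_pos]
          nlinarith
  calc (1 + z) ^ a * exp (-z / 4) ≤ k ^ a * exp (z / 4) * exp (-z / 4) := by gcongr
    _ = k ^ a := by rw [mul_assoc, ← exp_add, neg_div, add_neg_cancel, exp_zero, mul_one]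

theorem rpow_neg_mul_exp_neg_sq_div_le {a r T : ℝ} (ha : 0 ≤ a) (hT : 0 < T) :
    T ^ (-a) * exp (-r ^ 2 / (4 * T)) ≤ (4 * a + 1) ^ a / (r ^ 2 + T) ^ a := by
  have hsplit : r ^ 2 + T = T * (1 + r ^ 2 / T) := by field_simp; ring
  rw [le_div_iff₀ (by positivity), hsplit, mul_rpow hT.le (by positivity), rpow_neg hT.le]
  calc (T ^ a)⁻¹ * exp (-r ^ 2 / (4 * T)) * (T ^ a * (1 + r ^ 2 / T) ^ a)
      = (1 + r ^ 2 / T) ^ a * exp (-(r ^ 2 / T) / 4) := by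
        field_simp [(rpow_pos_of_pos hT a).ne']
    _ ≤ (4 * a + 1) ^ a := one_add_rpow_mul_exp_neg_le ha (by positivity)

def parabolicCylinder {E : Type*} [Norm E] (R : ℝ) : Set (E × ℝ) :=
  {p | ‖p.1‖ ≤ R ∧ |p.2| ≤ R ^ 2}

theorem one_add_sq_add_abs_le_of_notMem_parabolicCylinder {E : Type*} [SeminormedAddCommGroup E]
    {R t τ : ℝ} {x y : E} (hR : 1 ≤ R) (hx : ‖x‖ ≤ R / 2) (ht : |t| ≤ R ^ 2 / 4) (hτ : τ < t)
    (hout : (y, τ) ∉ parabolicCylinder R) :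
    1 + ‖y‖ ^ 2 + |τ| ≤ 12 * (‖x - y‖ ^ 2 + (t - τ)) := by
  have hy : ‖y‖ ≤ ‖x - y‖ + R / 2 := by
    have := norm_sub_le_norm_sub_add_norm_sub y x 0
    simp only [sub_zero, norm_sub_rev y x] at this
    linarith
  have ht' := abs_le.1 ht
  have hr := norm_nonneg (x - y)
  by_cases hτR : |τ| ≤ R ^ 2
  · have hyR : R < ‖y‖ := not_le.1 fun h => hout ⟨h, hτR⟩
    nlinarith
  · have hτneg : τ < 0 := by
      by_contra h
      rw [abs_of_nonneg (not_lt.1 h)] at hτR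
      nlinarith
    rw [abs_of_neg hτneg] at hτR ⊢
    have hy2 : ‖y‖ ^ 2 ≤ 2 * ‖x - y‖ ^ 2 + R ^ 2 / 2 := by
      nlinarith [sq_nonneg (‖x - y‖ - R / 2), norm_nonneg y]
    nlinarith

theorem one_add_rpow_add_rpow_le {a Y τ : ℝ} (ha : 0 ≤ a) (hY : 0 ≤ Y) :
    1 + Y ^ (2 * a) + |τ| ^ a ≤ 3 * (1 + Y ^ 2 + |τ|) ^ a := by
  have hτ := abs_nonneg τ
  have hY2 := sq_nonneg Y
  have h1 : (1 : ℝ) ≤ (1 + Y ^ 2 + |τ|) ^ a := one_le_rpow (by linarith) ha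
  have h2 : Y ^ (2 * a) ≤ (1 + Y ^ 2 + |τ|) ^ a := by
    rw [rpow_mul hY, Real.rpow_ofNat]
    exact rpow_le_rpow hY2 (by linarith) ha
  have h3 : |τ| ^ a ≤ (1 + Y ^ 2 + |τ|) ^ a := rpow_le_rpow hτ (by linarith) ha
  linarith

theorem rpow_neg_mul_exp_le_div_of_notMem_parabolicCylinder {E : Type*}
    [SeminormedAddCommGroup E] {a R t τ : ℝ} {x y : E} (ha : 0 ≤ a) (hR : 1 ≤ R)
    (hx : ‖x‖ ≤ R / 2) (ht : |t| ≤ R ^ 2 / 4) (hτ : τ < t)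
    (hout : (y, τ) ∉ parabolicCylinder R) :
    (t - τ) ^ (-a) * exp (-‖x - y‖ ^ 2 / (4 * (t - τ))) ≤
      3 * (48 * a + 12) ^ a / (1 + ‖y‖ ^ (2 * a) + |τ| ^ a) := by
  have hT : 0 < t - τ := sub_pos.2 hτ
  have hweight : 1 + ‖y‖ ^ (2 * a) + |τ| ^ a ≤ 3 * (12 * (‖x - y‖ ^ 2 + (t - τ))) ^ a :=
    (one_add_rpow_add_rpow_le ha (norm_nonneg y)).trans <| by
      gcongr
      exact one_add_sq_add_abs_le_of_notMem_parabolicCylinder hR hx ht hτ hout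
  refine (rpow_neg_mul_exp_neg_sq_div_le ha hT).trans ?_
  rw [div_le_div_iff₀ (by positivity) (by positivity)]
  calc (4 * a + 1) ^ a * (1 + ‖y‖ ^ (2 * a) + |τ| ^ a)
      ≤ (4 * a + 1) ^ a * (3 * (12 * (‖x - y‖ ^ 2 + (t - τ))) ^ a) := by gcongr
    _ = 3 * (48 * a + 12) ^ a * (‖x - y‖ ^ 2 + (t - τ)) ^ a := by
      rw [show 48 * a + 12 = 12 * (4 * a + 1) by ring, mul_rpow (by norm_num) (by positivity),
        mul_rpow (by norm_num) (by positivity)]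
      ring

theorem heatM_nonneg {n : ℕ} {s c t : ℝ} (x : EuclideanSpace ℝ (Fin n)) (hc : 0 ≤ c)
    (ht : 0 ≤ t) : 0 ≤ heatM n s c x t := by
  unfold heatM
  have := rpow_nonneg ht (-((n : ℝ) / 2 + 1 + s))
  positivity

theorem heatM_le_div_of_notMem_parabolicCylinder {n : ℕ} {s c R t τ : ℝ}
    {x y : EuclideanSpace ℝ (Fin n)} (ha : 0 ≤ (n : ℝ) / 2 + 1 + s) (hc : 0 ≤ c) (hR : 1 ≤ R)
    (hx : ‖x‖ ≤ R / 2) (ht : |t| ≤ R ^ 2 / 4) (hτ : τ < t)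
    (hout : (y, τ) ∉ parabolicCylinder R) :
    heatM n s c (x - y) (t - τ) ≤
      c * (3 * (48 * ((n : ℝ) / 2 + 1 + s) + 12) ^ ((n : ℝ) / 2 + 1 + s)) /
        (1 + ‖y‖ ^ ((n : ℝ) + 2 + 2 * s) + |τ| ^ ((n : ℝ) / 2 + 1 + s)) := by
  rw [heatM, show (n : ℝ) + 2 + 2 * s = 2 * ((n : ℝ) / 2 + 1 + s) by ring, mul_assoc,
    mul_div_assoc]
  exact mul_le_mul_of_nonneg_left
    (rpow_neg_mul_exp_le_div_of_notMem_parabolicCylinder ha hR hx ht hτ hout) hc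

theorem measurableSet_parabolicCylinder {E : Type*} [SeminormedAddCommGroup E] [MeasurableSpace E]
    [OpensMeasurableSpace E] (R : ℝ) : MeasurableSet (parabolicCylinder (E := E) R) :=
  show MeasurableSet ({p : E × ℝ | ‖p.1‖ ≤ R} ∩ {p | |p.2| ≤ R ^ 2}) from
  (measurableSet_le (continuous_norm.measurable.comp measurable_fst) measurable_const).inter
    (measurableSet_le measurable_snd.abs measurable_const)

theorem parabolicCylinder_mono {E : Type*} [SeminormedAddCommGroup E] :
    Monotone (parabolicCylinder (E := E)) := by
  intro R R' hRR' p ⟨h1, h2⟩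
  have hR : 0 ≤ R := (norm_nonneg p.1).trans h1
  exact ⟨h1.trans hRR', h2.trans (pow_le_pow_left₀ hR hRR' 2)⟩

theorem iUnion_parabolicCylinder {E : Type*} [SeminormedAddCommGroup E] :
    ⋃ R : ℝ, parabolicCylinder (E := E) R = Set.univ := by
  refine Set.eq_univ_of_forall fun p => Set.mem_iUnion.2 ⟨‖p.1‖ + |p.2| + 1, ?_, ?_⟩
  · linarith [abs_nonneg p.2]
  · nlinarith [norm_nonneg p.1, abs_nonneg p.2]

theorem tendsto_setLIntegral_compl_parabolicCylinder {E : Type*} [SeminormedAddCommGroup E]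
    [MeasurableSpace E] [OpensMeasurableSpace E] {μ : Measure (E × ℝ)} {g : E × ℝ → ℝ≥0∞}
    (hg : ∫⁻ p, g p ∂μ ≠ ∞) :
    Tendsto (fun R : ℝ => ∫⁻ p in (parabolicCylinder R)ᶜ, g p ∂μ) atTop (𝓝 0) := by
  have hfin : IsFiniteMeasure (μ.withDensity g) := isFiniteMeasure_withDensity hg
  have h := tendsto_measure_iInter_atTop (μ := μ.withDensity g)
    (fun R => (measurableSet_parabolicCylinder R).compl.nullMeasurableSet)
    (fun _ _ h => Set.compl_subset_compl.2 (parabolicCylinder_mono h)) ⟨0, measure_ne_top _ _⟩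
  rw [← Set.compl_iUnion, iUnion_parabolicCylinder, Set.compl_univ, measure_empty] at h
  refine h.congr fun R => ?_
  exact withDensity_apply g (measurableSet_parabolicCylinder R).compl

theorem integral_lt_of_lintegral_enorm_lt {α : Type*} [MeasurableSpace α] {μ : Measure α}
    {f : α → ℝ} {ε : ℝ} (h : ∫⁻ x, ‖f x‖ₑ ∂μ < ENNReal.ofReal ε) : ∫ x, f x ∂μ < ε := by
  have h' : ENNReal.ofReal (∫ x, f x ∂μ) < ENNReal.ofReal ε :=
    calc ENNReal.ofReal (∫ x, f x ∂μ) ≤ ‖∫ x, f x ∂μ‖ₑ := by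
          rw [enorm_eq_ofReal_abs]; exact ofReal_le_ofReal (le_abs_self _)
      _ ≤ ∫⁻ x, ‖f x‖ₑ ∂μ := enorm_integral_le_lintegral_enorm f
      _ < ENNReal.ofReal ε := h
  exact (ofReal_lt_ofReal_iff'.1 h').1

theorem enorm_abs_mul_le_ofReal_mul_ofReal_div {v m C w : ℝ} (hm : 0 ≤ m) (hC : 0 ≤ C)
    (hmC : m ≤ C / w) : ‖|v| * m‖ₑ ≤ ENNReal.ofReal C * ENNReal.ofReal (|v| / w) := by
  rw [enorm_eq_ofReal_abs, ← ofReal_mul hC, abs_of_nonneg (by positivity)]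
  refine ofReal_le_ofReal ?_
  calc |v| * m ≤ |v| * (C / w) := mul_le_mul_of_nonneg_left hmC (abs_nonneg v)
    _ = C * (|v| / w) := by ring

theorem stmt15_general (n : ℕ) (s : ℝ) (hs : s ∈ Set.Ioo (0 : ℝ) 1)
    (cns : ℝ) (hcns : 0 < cns)
    (u : EuclideanSpace ℝ (Fin n) × ℝ → ℝ)
    (hint : (∫⁻ p : EuclideanSpace ℝ (Fin n) × ℝ,
        ENNReal.ofReal (|u p| / (1 + ‖p.1‖ ^ ((n : ℝ) + 2 + 2 * s)
          + |p.2| ^ ((n : ℝ) / 2 + 1 + s)))) < ⊤) :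
    ∀ ε : ℝ, 0 < ε → ∃ R₀ : ℝ, ∀ R ≥ R₀, ∀ (x : EuclideanSpace ℝ (Fin n)) (t : ℝ),
      ‖x‖ ≤ R / 2 → |t| ≤ R ^ 2 / 4 →
      (∫ p in {p : EuclideanSpace ℝ (Fin n) × ℝ |
          p.2 < t ∧ ¬(‖p.1‖ ≤ R ∧ |p.2| ≤ R ^ 2)},
        |u p| * heatM n s cns (x - p.1) (t - p.2)) < ε := by
  intro ε hε
  have ha : 0 ≤ (n : ℝ) / 2 + 1 + s := by linarith [hs.1, (by positivity : (0 : ℝ) ≤ n / 2)]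
  set C := cns * (3 * (48 * ((n : ℝ) / 2 + 1 + s) + 12) ^ ((n : ℝ) / 2 + 1 + s))
  have hC : 0 < C := by positivity
  set g := fun p : EuclideanSpace ℝ (Fin n) × ℝ => ENNReal.ofReal
    (|u p| / (1 + ‖p.1‖ ^ ((n : ℝ) + 2 + 2 * s) + |p.2| ^ ((n : ℝ) / 2 + 1 + s)))
  obtain ⟨R₀, hR₀⟩ := eventually_atTop.1 <| (tendsto_setLIntegral_compl_parabolicCylinder
    hint.ne).eventually (Iio_mem_nhds (ofReal_pos.2 (div_pos hε hC)))
  refine ⟨max R₀ 1, fun R hR x t hx ht => integral_lt_of_lintegral_enorm_lt ?_⟩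
  have hpast : MeasurableSet {p : EuclideanSpace ℝ (Fin n) × ℝ | p.2 < t} :=
    measurableSet_lt measurable_snd measurable_const
  calc ∫⁻ p in {p | p.2 < t} ∩ (parabolicCylinder R)ᶜ,
        ‖|u p| * heatM n s cns (x - p.1) (t - p.2)‖ₑ
      ≤ ∫⁻ p in {p | p.2 < t} ∩ (parabolicCylinder R)ᶜ, ENNReal.ofReal C * g p :=
        setLIntegral_mono' (hpast.inter (measurableSet_parabolicCylinder R).compl)
          fun p ⟨hτ, hout⟩ => enorm_abs_mul_le_ofReal_mul_ofReal_div
            (heatM_nonneg _ hcns.le (sub_pos.2 hτ).le) hC.le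
            (heatM_le_div_of_notMem_parabolicCylinder ha hcns.le (le_of_max_le_right hR)
              hx ht hτ hout)
    _ ≤ ∫⁻ p in (parabolicCylinder R)ᶜ, ENNReal.ofReal C * g p :=
        lintegral_mono_set Set.inter_subset_right
    _ = ENNReal.ofReal C * ∫⁻ p in (parabolicCylinder R)ᶜ, g p :=
        lintegral_const_mul' _ _ ofReal_ne_top
    _ < ENNReal.ofReal C * ENNReal.ofReal (ε / C) :=
        ENNReal.mul_lt_mul_right (by simpa using hC) ofReal_ne_top (hR₀ R (le_of_max_le_left hR))
    _ = ENNReal.ofReal ε := by rw [← ofReal_mul hC.le, mul_div_cancel₀ _ hC.ne']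

theorem stmt15 (n : ℕ) (hn : 1 ≤ n) (s : ℝ) (hs : s ∈ Set.Ioo (0 : ℝ) 1)
    (cns : ℝ) (hcns : 0 < cns)
    (u : EuclideanSpace ℝ (Fin n) × ℝ → ℝ)
    (hu : MeasureTheory.LocallyIntegrable u volume)
    (hint : (∫⁻ p : EuclideanSpace ℝ (Fin n) × ℝ,
        ENNReal.ofReal (|u p| / (1 + ‖p.1‖ ^ ((n : ℝ) + 2 + 2 * s)
          + |p.2| ^ ((n : ℝ) / 2 + 1 + s)))) < ⊤) :
    ∀ ε : ℝ, 0 < ε → ∃ R₀ : ℝ, ∀ R ≥ R₀, ∀ (x : EuclideanSpace ℝ (Fin n)) (t : ℝ),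
      ‖x‖ ≤ R / 2 → |t| ≤ R ^ 2 / 4 →
      (∫ p in {p : EuclideanSpace ℝ (Fin n) × ℝ |
          p.2 < t ∧ ¬(‖p.1‖ ≤ R ∧ |p.2| ≤ R ^ 2)},
        |u p| * heatM n s cns (x - p.1) (t - p.2)) < ε :=
  stmt15_general n s hs cns hcns u hint
end

section
/- Let n ≥ 1, s ∈ (0,1) with 2s + ε < 1 for some ε > 0, and R > 0. There is a constant C(R) such that for any function v on ℝ^n × ℝ with parabolic Hölder seminorm [v] := sup_{(x,t),(y,τ)∈Q_R} |v(x,t)-v(y,τ)|/(|x-y|^{2s+ε} + |t-τ|^{s+ε/2}) finite, and any (x,t) ∈ Q_{R/3}, one has |∫_{-R²}^t ∫_{B_R} (v(x,t) - v(y,τ)) M(x-y, t-τ) dy dτ| ≤ C(R)·[v]. -/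
/-!
For `a = t - τ > 0` the Hölder bound gives `|v(x,t) - v(y,τ)| ≤ L (|x-y|^(2q) + a^q)`
with `q = s + ε/2`. Writing `e^(-|z|²/4a) = (e^(-|z|²/8a))²` and using `u^q e^(-u) ≤ 1`
for `q ≤ 1`, the weight `(|z|^(2q) + a^q) M(z,a)` is at most a multiple of
`a^(q-n/2-1-s) e^(-|z|²/8a)`.
The Gaussian integral contributes `(8πa)^(n/2)`, so the inner integral is `O(L a^(ε/2-1))`,
which is integrable in `τ` near `t` because `ε > 0`.
-/

open MeasureTheory Real

lemma rpow_mul_exp_neg_le_one {q u : ℝ} (hq0 : 0 ≤ q) (hq1 : q ≤ 1) (hu : 0 ≤ u) :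
    u ^ q * exp (-u) ≤ 1 := by
  have hle : u ^ q ≤ exp u :=
    calc u ^ q ≤ (1 + u) ^ q := by gcongr; linarith
      _ ≤ (1 + u) ^ (1 : ℝ) := rpow_le_rpow_of_exponent_le (by linarith) hq1
      _ = u + 1 := by rw [rpow_one, add_comm]
      _ ≤ exp u := add_one_le_exp u
  calc u ^ q * exp (-u) ≤ exp u * exp (-u) := by gcongr
    _ = 1 := by rw [← exp_add, add_neg_cancel, exp_zero]

lemma rpow_two_mul_mul_exp_neg_sq_div_le {q r k : ℝ} (hq0 : 0 ≤ q) (hq1 : q ≤ 1)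
    (hr : 0 ≤ r) (hk : 0 < k) : r ^ (2 * q) * exp (-(r ^ 2 / k)) ≤ k ^ q := by
  have hsplit : r ^ (2 * q) = k ^ q * (r ^ 2 / k) ^ q := by
    rw [← mul_rpow hk.le (by positivity), mul_div_cancel₀ _ hk.ne', rpow_mul hr,
      rpow_two]
  rw [hsplit, mul_assoc]
  exact mul_le_of_le_one_right (by positivity)
    (rpow_mul_exp_neg_le_one hq0 hq1 (by positivity))

lemma add_rpow_mul_heatM_le {n : ℕ} {s c q a : ℝ} (hc : 0 ≤ c) (hq0 : 0 ≤ q) (hq1 : q ≤ 1)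
    (ha : 0 < a) (z : EuclideanSpace ℝ (Fin n)) :
    (‖z‖ ^ (2 * q) + a ^ q) * heatM n s c z a ≤
      c * (8 ^ q + 1) * a ^ (q - ((n : ℝ) / 2 + 1 + s)) * exp (-(8 * a)⁻¹ * ‖z‖ ^ 2) := by
  set G := exp (-(8 * a)⁻¹ * ‖z‖ ^ 2)
  -- half of the Gaussian factor absorbs the spatial weight, the other half is kept
  have hsq : exp (-‖z‖ ^ 2 / (4 * a)) = G * G := by
    rw [← exp_add]; congr 1; field_simp; ring
  have hweight : (‖z‖ ^ (2 * q) + a ^ q) * G ≤ (8 ^ q + 1) * a ^ q := by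
    have hspace : ‖z‖ ^ (2 * q) * G ≤ (8 * a) ^ q := by
      convert rpow_two_mul_mul_exp_neg_sq_div_le hq0 hq1 (norm_nonneg z)
        (by positivity : 0 < 8 * a) using 3
      ring
    have htime : a ^ q * G ≤ a ^ q :=
      mul_le_of_le_one_right (by positivity)
        (exp_le_one_iff.2 (by rw [neg_mul, neg_nonpos]; positivity))
    rw [mul_rpow (by norm_num) ha.le] at hspace
    linarith [add_mul (‖z‖ ^ (2 * q)) (a ^ q) G]
  calc (‖z‖ ^ (2 * q) + a ^ q) * heatM n s c z a
      = c * a ^ (-((n : ℝ) / 2 + 1 + s)) * G * ((‖z‖ ^ (2 * q) + a ^ q) * G) := by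
        rw [heatM, hsq]; ring
    _ ≤ c * a ^ (-((n : ℝ) / 2 + 1 + s)) * G * ((8 ^ q + 1) * a ^ q) := by gcongr
    _ = c * (8 ^ q + 1) * a ^ (q - ((n : ℝ) / 2 + 1 + s)) * G := by
        rw [sub_eq_add_neg, rpow_add ha]; ring

lemma integrable_exp_neg_mul_sq_norm {V : Type*} [NormedAddCommGroup V] [InnerProductSpace ℝ V]
    [FiniteDimensional ℝ V] [MeasurableSpace V] [BorelSpace V] {b : ℝ} (hb : 0 < b) :
    Integrable (fun v : V => exp (-b * ‖v‖ ^ 2)) :=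
  Integrable.of_integral_ne_zero <| by
    rw [GaussianFourier.integral_rexp_neg_mul_sq_norm hb]; positivity

lemma norm_setIntegral_mul_heatM_le {n : ℕ} {s c q a L : ℝ} (hc : 0 ≤ c) (hq0 : 0 ≤ q)
    (hq1 : q ≤ 1) (ha : 0 < a) (hL : 0 ≤ L) {S : Set (EuclideanSpace ℝ (Fin n))}
    (hS : MeasurableSet S) (x : EuclideanSpace ℝ (Fin n)) {f : EuclideanSpace ℝ (Fin n) → ℝ}
    (hf : ∀ y ∈ S, |f y| ≤ L * (‖x - y‖ ^ (2 * q) + a ^ q)) :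
    ‖∫ y in S, f y * heatM n s c (x - y) a‖ ≤
      c * (8 ^ q + 1) * (8 * π) ^ ((n : ℝ) / 2) * L * a ^ (q - 1 - s) := by
  set b := (8 * a)⁻¹
  set K := c * (8 ^ q + 1) * a ^ (q - ((n : ℝ) / 2 + 1 + s))
  have hb : 0 < b := by positivity
  have hG : Integrable (fun y : EuclideanSpace ℝ (Fin n) => exp (-b * ‖x - y‖ ^ 2)) :=
    (integrable_exp_neg_mul_sq_norm hb).comp_sub_left x
  have hpt :
      ∀ y ∈ S, ‖f y * heatM n s c (x - y) a‖ ≤ L * K * exp (-b * ‖x - y‖ ^ 2) := by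
    intro y hy
    have hM : 0 ≤ heatM n s c (x - y) a := by unfold heatM; positivity
    rw [norm_mul, norm_eq_abs, norm_of_nonneg hM, mul_assoc]
    calc |f y| * heatM n s c (x - y) a
        ≤ L * (‖x - y‖ ^ (2 * q) + a ^ q) * heatM n s c (x - y) a := by gcongr; exact hf y hy
      _ ≤ L * (K * exp (-b * ‖x - y‖ ^ 2)) := by
        rw [mul_assoc]
        exact mul_le_mul_of_nonneg_left (add_rpow_mul_heatM_le hc hq0 hq1 ha _) hL
  have hGauss :
      ∫ y in S, exp (-b * ‖x - y‖ ^ 2) ≤ (8 * π) ^ ((n : ℝ) / 2) * a ^ ((n : ℝ) / 2) :=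
    calc ∫ y in S, exp (-b * ‖x - y‖ ^ 2)
        ≤ ∫ y, exp (-b * ‖x - y‖ ^ 2) :=
          setIntegral_le_integral hG (.of_forall fun _ => (exp_pos _).le)
      _ = (π / b) ^ ((n : ℝ) / 2) := by
          rw [integral_sub_left_eq_self (fun z => exp (-b * ‖z‖ ^ 2)),
            GaussianFourier.integral_rexp_neg_mul_sq_norm hb, finrank_euclideanSpace_fin]
      _ = (8 * π) ^ ((n : ℝ) / 2) * a ^ ((n : ℝ) / 2) := by
          rw [← mul_rpow (by positivity) ha.le]; congr 1; simp only [b, div_inv_eq_mul]; ring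
  calc ‖∫ y in S, f y * heatM n s c (x - y) a‖
      ≤ ∫ y in S, L * K * exp (-b * ‖x - y‖ ^ 2) :=
        norm_integral_le_of_norm_le (hG.restrict.const_mul _) ((ae_restrict_mem hS).mono hpt)
    _ ≤ L * K * ((8 * π) ^ ((n : ℝ) / 2) * a ^ ((n : ℝ) / 2)) := by
        rw [integral_const_mul]; gcongr
    _ = c * (8 ^ q + 1) * (8 * π) ^ ((n : ℝ) / 2) * L * a ^ (q - 1 - s) := by
        have : q - 1 - s = q - ((n : ℝ) / 2 + 1 + s) + (n : ℝ) / 2 := by ring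
        rw [this, rpow_add ha]; ring

lemma integrableOn_Ioc_sub_rpow {t₀ t p : ℝ} (h : t₀ ≤ t) (hp : 0 < p) :
    IntegrableOn (fun τ => (t - τ) ^ (p - 1)) (Set.Ioc t₀ t) := by
  have := (intervalIntegral.intervalIntegrable_rpow' (a := 0) (b := t - t₀)
    (by linarith : -1 < p - 1)).comp_sub_left t
  rw [sub_zero, sub_sub_cancel] at this
  exact (intervalIntegrable_iff_integrableOn_Ioc_of_le h).1 this.symm

lemma integral_Ioc_sub_rpow {t₀ t p : ℝ} (h : t₀ ≤ t) (hp : 0 < p) :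
    ∫ τ in Set.Ioc t₀ t, (t - τ) ^ (p - 1) = (t - t₀) ^ p / p := by
  rw [← intervalIntegral.integral_of_le h, intervalIntegral.integral_comp_sub_left
    (fun u => u ^ (p - 1)), sub_self, integral_rpow (by left; linarith), sub_add_cancel,
    zero_rpow hp.ne', sub_zero]

theorem stmt16_general (n : ℕ) (s : ℝ) (hs : s ∈ Set.Ioo (0 : ℝ) 1)
    (cns : ℝ) (hcns : 0 < cns)
    (ε R : ℝ) (hε : 0 < ε) (hsmall : 2 * s + ε < 1) (hR : 0 < R) :
    ∃ C : ℝ, 0 < C ∧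
      ∀ (v : EuclideanSpace ℝ (Fin n) × ℝ → ℝ) (L : ℝ), 0 ≤ L →
        (∀ p q : EuclideanSpace ℝ (Fin n) × ℝ,
          ‖p.1‖ ≤ R → |p.2| ≤ R ^ 2 → ‖q.1‖ ≤ R → |q.2| ≤ R ^ 2 →
          |v p - v q| ≤ L * (‖p.1 - q.1‖ ^ (2 * s + ε) + |p.2 - q.2| ^ (s + ε / 2))) →
        ∀ (x : EuclideanSpace ℝ (Fin n)) (t : ℝ), ‖x‖ ≤ R / 3 → |t| ≤ R ^ 2 / 9 →
          |∫ τ in Set.Ioc (-R ^ 2) t, ∫ y in Metric.ball (0 : EuclideanSpace ℝ (Fin n)) R,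
              (v (x, t) - v (y, τ)) * heatM n s cns (x - y) (t - τ)|
            ≤ C * L := by
  have hq0 : 0 ≤ s + ε / 2 := by linarith [hs.1]
  have hq1 : s + ε / 2 ≤ 1 := by linarith
  set q := s + ε / 2
  set K := cns * (8 ^ q + 1) * (8 * π) ^ ((n : ℝ) / 2)
  refine ⟨K * (2 * R ^ 2) ^ (ε / 2) / (ε / 2), by positivity, ?_⟩
  intro v L hL hv x t hx ht
  obtain ⟨ht₀, ht₁⟩ := abs_le.1 ht
  have hinner : ∀ τ ∈ Set.Ioo (-R ^ 2) t,
      ‖∫ y in Metric.ball 0 R, (v (x, t) - v (y, τ)) * heatM n s cns (x - y) (t - τ)‖ ≤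
        K * L * (t - τ) ^ (ε / 2 - 1) := by
    rintro τ ⟨hτ₀, hτ₁⟩
    convert norm_setIntegral_mul_heatM_le hcns.le hq0 hq1 (sub_pos.2 hτ₁) hL measurableSet_ball x
      fun y hy => ?_ using 3
    · simp only [q]; ring
    have := hv (x, t) (y, τ) (by linarith) (abs_le.2 ⟨by linarith, by linarith⟩)
      (mem_ball_zero_iff.1 hy).le (abs_le.2 ⟨by linarith, by linarith⟩)
    rwa [abs_of_pos (sub_pos.2 hτ₁), show 2 * s + ε = 2 * q by ring] at this
  calc |∫ τ in Set.Ioc (-R ^ 2) t, ∫ y in Metric.ball 0 R,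
        (v (x, t) - v (y, τ)) * heatM n s cns (x - y) (t - τ)|
      ≤ ∫ τ in Set.Ioo (-R ^ 2) t, K * L * (t - τ) ^ (ε / 2 - 1) := by
        rw [integral_Ioc_eq_integral_Ioo, ← norm_eq_abs]
        exact norm_integral_le_of_norm_le
          (((integrableOn_Ioc_sub_rpow (by linarith) (by positivity)).mono_set
            Set.Ioo_subset_Ioc_self).const_mul _) ((ae_restrict_mem measurableSet_Ioo).mono hinner)
    _ = K * L * ((t + R ^ 2) ^ (ε / 2) / (ε / 2)) := by
        rw [integral_const_mul, ← integral_Ioc_eq_integral_Ioo,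
          integral_Ioc_sub_rpow (by linarith) (by positivity), sub_neg_eq_add]
    _ ≤ K * L * ((2 * R ^ 2) ^ (ε / 2) / (ε / 2)) := by gcongr <;> linarith [sq_nonneg R]
    _ = K * (2 * R ^ 2) ^ (ε / 2) / (ε / 2) * L := by ring

theorem stmt16 (n : ℕ) (hn : 1 ≤ n) (s : ℝ) (hs : s ∈ Set.Ioo (0 : ℝ) 1)
    (cns : ℝ) (hcns : 0 < cns)
    (ε R : ℝ) (hε : 0 < ε) (hsmall : 2 * s + ε < 1) (hR : 0 < R) :
    ∃ C : ℝ, 0 < C ∧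
      ∀ (v : EuclideanSpace ℝ (Fin n) × ℝ → ℝ) (L : ℝ), 0 ≤ L →
        (∀ p q : EuclideanSpace ℝ (Fin n) × ℝ,
          ‖p.1‖ ≤ R → |p.2| ≤ R ^ 2 → ‖q.1‖ ≤ R → |q.2| ≤ R ^ 2 →
          |v p - v q| ≤ L * (‖p.1 - q.1‖ ^ (2 * s + ε) + |p.2 - q.2| ^ (s + ε / 2))) →
        ∀ (x : EuclideanSpace ℝ (Fin n)) (t : ℝ), ‖x‖ ≤ R / 3 → |t| ≤ R ^ 2 / 9 →
          |∫ τ in Set.Ioc (-R ^ 2) t, ∫ y in Metric.ball (0 : EuclideanSpace ℝ (Fin n)) R,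
              (v (x, t) - v (y, τ)) * heatM n s cns (x - y) (t - τ)|
            ≤ C * L :=
  stmt16_general n s hs cns hcns ε R hε hsmall hR
end
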